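/- arXiv:1811.12468 — 2 statements merged into one kernel-verified Lean document; each statement's English description precedes it below -/
import Mathlib

section
/- For every \alpha \in (0,1) and every p \in (0,1), the series \sum_{n=1}^{\infty} (1-\alpha)^n A_n p^n (1-p)^{n+2} converges and equals g_\alpha(p) = (1 - \sqrt{1 - 4(1-\alpha)p(1-p)})^3 / (8(1-\alpha)^2 p^2). -/
open Finset

/-
Let C(x) = ∑ Cₙ xⁿ, absolutely convergent for |x| < 1/4 since Cₙ ≤ 4ⁿ. The Catalan recursion,
read through the Cauchy product, gives C = 1 + x C², so 1 - 2x C(x) is a continuous square root of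
1 - 4x on [-|x|, |x|] equal to 1 at 0; since 1 - 4x does not vanish there, it is the positive root:
C(x) = (1 - √(1 - 4x)) / (2x). The recursion for A says ∑ Aₙ₊₁ xⁿ = C(x)³, and with
x = (1-α)p(1-p) the series in question is x (1-p)² C(x)³ = g_α(p).
-/

/-- `g α x` : the expected density after the epidemic stage on a percolated 3-tree. -/
noncomputable def g (α x : ℝ) : ℝ :=
  if x = 0 then 0
  else (1 - Real.sqrt (1 - 4 * (1 - α) * x * (1 - x))) ^ 3 / (8 * (1 - α) ^ 2 * x ^ 2)

section CauchyProduct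

variable {R : Type*} [NormedCommRing R]

theorem sum_antidiagonal_mul_pow_mul_mul_pow (a b : ℕ → R) (x : R) (n : ℕ) :
    ∑ kl ∈ antidiagonal n, a kl.1 * x ^ kl.1 * (b kl.2 * x ^ kl.2) =
      (∑ kl ∈ antidiagonal n, a kl.1 * b kl.2) * x ^ n := by
  rw [sum_mul]
  refine sum_congr rfl fun kl hkl => ?_
  rw [← mem_antidiagonal.mp hkl, pow_add]
  ring

variable {a b : ℕ → R} {x : R}

theorem summable_norm_sum_antidiagonal_mul_pow (ha : Summable fun n => ‖a n * x ^ n‖)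
    (hb : Summable fun n => ‖b n * x ^ n‖) :
    Summable fun n => ‖(∑ kl ∈ antidiagonal n, a kl.1 * b kl.2) * x ^ n‖ := by
  simpa only [sum_antidiagonal_mul_pow_mul_mul_pow] using
    summable_norm_sum_mul_antidiagonal_of_summable_norm ha hb

theorem hasSum_sum_antidiagonal_mul_pow [CompleteSpace R] (ha : Summable fun n => ‖a n * x ^ n‖)
    (hb : Summable fun n => ‖b n * x ^ n‖) :
    HasSum (fun n => (∑ kl ∈ antidiagonal n, a kl.1 * b kl.2) * x ^ n)
      ((∑' n, a n * x ^ n) * ∑' n, b n * x ^ n) := by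
  rw [tsum_mul_tsum_eq_tsum_sum_antidiagonal_of_summable_norm ha hb]
  simpa only [sum_antidiagonal_mul_pow_mul_mul_pow] using
    (summable_norm_sum_mul_antidiagonal_of_summable_norm ha hb).of_norm.hasSum

end CauchyProduct

section CatalanGeneratingFunction

theorem catalan_le_four_pow (n : ℕ) : catalan n ≤ 4 ^ n :=
  calc catalan n ≤ (n + 1) * catalan n := Nat.le_mul_of_pos_left _ n.succ_pos
    _ = (2 * n).choose n := succ_mul_catalan_eq_centralBinom n
    _ ≤ (2 * n + 1).choose n := Nat.choose_le_choose n (Nat.le_succ _)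
    _ ≤ 4 ^ n := Nat.choose_middle_le_pow n

theorem norm_catalan_mul_pow_le {x y : ℝ} (hy : |y| ≤ x) (n : ℕ) :
    ‖(catalan n : ℝ) * y ^ n‖ ≤ (4 * x) ^ n := by
  rw [norm_mul, norm_pow, Real.norm_natCast, Real.norm_eq_abs, mul_pow]
  gcongr
  exact_mod_cast catalan_le_four_pow n

variable {x : ℝ}

theorem summable_norm_catalan_mul_pow (hx : 4 * |x| < 1) :
    Summable fun n => ‖(catalan n : ℝ) * x ^ n‖ :=
  .of_nonneg_of_le (fun _ => norm_nonneg _) (norm_catalan_mul_pow_le le_rfl)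
    (summable_geometric_of_lt_one (by positivity) hx)

theorem hasSum_catalan_succ_mul_pow (hx : 4 * |x| < 1) :
    HasSum (fun n => (catalan (n + 1) : ℝ) * x ^ n) ((∑' n, (catalan n : ℝ) * x ^ n) ^ 2) := by
  simpa only [catalan_succ', Nat.cast_sum, Nat.cast_mul, sq] using
    hasSum_sum_antidiagonal_mul_pow (summable_norm_catalan_mul_pow hx)
      (summable_norm_catalan_mul_pow hx)

theorem summable_norm_catalan_succ_mul_pow (hx : 4 * |x| < 1) :
    Summable fun n => ‖(catalan (n + 1) : ℝ) * x ^ n‖ := by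
  simpa only [catalan_succ', Nat.cast_sum, Nat.cast_mul] using
    summable_norm_sum_antidiagonal_mul_pow (summable_norm_catalan_mul_pow hx)
      (summable_norm_catalan_mul_pow hx)

theorem tsum_catalan_mul_pow_eq (hx : 4 * |x| < 1) :
    ∑' n, (catalan n : ℝ) * x ^ n = 1 + x * (∑' n, (catalan n : ℝ) * x ^ n) ^ 2 := by
  conv_lhs => rw [(summable_norm_catalan_mul_pow hx).of_norm.tsum_eq_zero_add]
  rw [← ((hasSum_catalan_succ_mul_pow hx).mul_left x).tsum_eq]
  simp only [catalan_zero, Nat.cast_one, pow_zero, mul_one, pow_succ]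
  congr 1
  exact tsum_congr fun n => by ring

theorem hasSum_catalan_mul_pow (hx : 4 * |x| < 1) (hx₀ : x ≠ 0) :
    HasSum (fun n => (catalan n : ℝ) * x ^ n) ((1 - √(1 - 4 * x)) / (2 * x)) := by
  set S := Set.Icc (-|x|) |x|
  have hS : ∀ {y}, y ∈ S → 4 * |y| < 1 := fun hy => by linarith [abs_le.mpr hy]
  have hcont : ContinuousOn (fun y => 1 - 2 * y * ∑' n, (catalan n : ℝ) * y ^ n) S := by
    refine continuousOn_const.sub (continuousOn_id.const_mul 2 |>.mul ?_)
    exact continuousOn_tsum (fun n => by fun_prop) (summable_geometric_of_lt_one (by positivity) hx)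
      fun n y hy => norm_catalan_mul_pow_le (abs_le.mpr hy) n
  have hroot : Set.EqOn (fun y => 1 - 2 * y * ∑' n, (catalan n : ℝ) * y ^ n)
      (fun y => √(1 - 4 * y)) S := by
    refine isPreconnected_Icc.eq_of_sq_eq hcont (by fun_prop) (fun y hy => ?_)
      (fun {y} hy => Real.sqrt_ne_zero'.mpr (by linarith [le_abs_self y, hS hy]))
      (y := (0 : ℝ)) ⟨neg_nonpos.mpr (abs_nonneg x), abs_nonneg x⟩ (by simp)
    have hC := tsum_catalan_mul_pow_eq (hS hy)
    simp only [Pi.pow_apply]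
    rw [Real.sq_sqrt (by linarith [le_abs_self y, hS hy])]
    linear_combination (-4 * y) * hC
  have hC : (1 - √(1 - 4 * x)) / (2 * x) = ∑' n, (catalan n : ℝ) * x ^ n := by
    have h := hroot ⟨neg_abs_le x, le_abs_self x⟩
    simp only at h
    rw [← h]
    field_simp
    ring
  exact hC ▸ (summable_norm_catalan_mul_pow hx).of_norm.hasSum

end CatalanGeneratingFunction

theorem sum_range_sum_range_catalan_mul_mul (n : ℕ) :
    ∑ i ∈ range (n + 1), ∑ j ∈ range (n + 1 - i), catalan i * catalan j * catalan (n - i - j) =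
      ∑ kl ∈ antidiagonal n, catalan kl.1 * catalan (kl.2 + 1) := by
  rw [Nat.sum_antidiagonal_eq_sum_range_succ (fun k l => catalan k * catalan (l + 1))]
  refine sum_congr rfl fun i hi => ?_
  rw [Nat.succ_sub (Nat.lt_succ_iff.mp (mem_range.mp hi)), catalan_succ,
    Fin.sum_univ_eq_sum_range (fun j => catalan j * catalan (n - i - j)), mul_sum]
  simp only [mul_assoc]

theorem hasSum_catalan_cube {x : ℝ} (hx : 4 * |x| < 1) :
    HasSum (fun n => (∑ kl ∈ antidiagonal n, (catalan kl.1 : ℝ) * catalan (kl.2 + 1)) * x ^ n)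
      ((∑' n, (catalan n : ℝ) * x ^ n) ^ 3) := by
  rw [pow_succ', ← (hasSum_catalan_succ_mul_pow hx).tsum_eq]
  simpa only using hasSum_sum_antidiagonal_mul_pow (summable_norm_catalan_mul_pow hx)
    (summable_norm_catalan_succ_mul_pow hx)

theorem stmt1_general (A : ℕ → ℕ)
    (hA : ∀ n : ℕ, A (n + 1) =
      ∑ i ∈ Finset.range (n + 1), ∑ j ∈ Finset.range (n + 1 - i),
        catalan i * catalan j * catalan (n - i - j))
    (α p : ℝ) (hα : α ∈ Set.Ioo (0 : ℝ) 1) (hp : p ∈ Set.Ioo (0 : ℝ) 1) :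
    HasSum (fun n : ℕ => (1 - α) ^ (n + 1) * (A (n + 1) : ℝ) * p ^ (n + 1) * (1 - p) ^ (n + 3))
      (g α p) := by
  obtain ⟨hα0, hα1⟩ := hα
  obtain ⟨hp0, hp1⟩ := hp
  set x := (1 - α) * p * (1 - p) with hx_def
  have hx0 : 0 < x := mul_pos (mul_pos (by linarith) hp0) (by linarith)
  have hx : 4 * |x| < 1 := by
    rw [abs_of_pos hx0]
    nlinarith [sq_nonneg (2 * p - 1), mul_pos hα0 (mul_pos hp0 (sub_pos.mpr hp1))]
  have hA_gen :
      HasSum (fun n => (A (n + 1) : ℝ) * x ^ n) ((∑' n, (catalan n : ℝ) * x ^ n) ^ 3) := by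
    simpa only [hA, sum_range_sum_range_catalan_mul_mul, Nat.cast_sum, Nat.cast_mul] using
      hasSum_catalan_cube hx
  rw [(hasSum_catalan_mul_pow hx hx0.ne').tsum_eq] at hA_gen
  have hval : g α p = (1 - p) ^ 2 * x * ((1 - √(1 - 4 * x)) / (2 * x)) ^ 3 := by
    simp only [g, if_neg hp0.ne', show 1 - 4 * (1 - α) * p * (1 - p) = 1 - 4 * x by ring]
    field_simp
    ring
  rw [hval]
  refine (hA_gen.mul_left _).congr_fun fun n => ?_
  rw [hx_def, mul_pow, mul_pow]
  ring

theorem stmt1 (A : ℕ → ℕ) (hA0 : A 0 = 1)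
    (hA : ∀ n : ℕ, A (n + 1) =
      ∑ i ∈ Finset.range (n + 1), ∑ j ∈ Finset.range (n + 1 - i),
        catalan i * catalan j * catalan (n - i - j))
    (α p : ℝ) (hα : α ∈ Set.Ioo (0 : ℝ) 1) (hp : p ∈ Set.Ioo (0 : ℝ) 1) :
    HasSum (fun n : ℕ => (1 - α) ^ (n + 1) * (A (n + 1) : ℝ) * p ^ (n + 1) * (1 - p) ^ (n + 3))
      (g α p) :=
  stmt1_general A hA α p hα hp
end

section
/- Define the linearized map \bar{h}(p) = (\varphi_1 p_1 \psi(\beta_2 p_2),\, t(p_2)), where t(x) = g_{\alpha_2}(1 - e^{-\beta_2 x}) and \psi(x) = (1-e^{-x})/x with \psi(0)=1. Then for every fixed k \in \mathbb{N}, the ratio \bar{h}^k_1(p) / h^k_1(p) converges to 1 as p_1 \to 0^+, uniformly over p_2 \in [0, 1-p_1]. -/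
/-- `ψ(x) = (1 - e^{-x})/x`, with `ψ(0) = 1`. -/
noncomputable def psi (x : ℝ) : ℝ := if x = 0 then 1 else (1 - Real.exp (-x)) / x

/-- `Σ_p = β₁ p₁ + β₂ p₂`. -/
noncomputable def Sig (β₁ β₂ : ℝ) (p : ℝ × ℝ) : ℝ := β₁ * p.1 + β₂ * p.2

/-- Growth map, first type. -/
noncomputable def f1 (β₁ β₂ : ℝ) (p : ℝ × ℝ) : ℝ :=
  if Sig β₁ β₂ p = 0 then 0
  else (1 - Real.exp (-Sig β₁ β₂ p)) * (β₁ * p.1) / Sig β₁ β₂ p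

/-- Growth map, second type. -/
noncomputable def f2 (β₁ β₂ : ℝ) (p : ℝ × ℝ) : ℝ :=
  if Sig β₁ β₂ p = 0 then 0
  else (1 - Real.exp (-Sig β₁ β₂ p)) * (β₂ * p.2) / Sig β₁ β₂ p

/-- The two-type limiting map `h(p) = (g_{α₁}(f₁(p)), g_{α₂}(f₂(p)))`. -/
noncomputable def hmap (α₁ α₂ β₁ β₂ : ℝ) (p : ℝ × ℝ) : ℝ × ℝ :=
  (g α₁ (f1 β₁ β₂ p), g α₂ (f2 β₁ β₂ p))

/-- The linearized map `h̄(p) = (φ₁ p₁ ψ(β₂ p₂), t(p₂))` with `t(x) = g_{α₂}(1 - e^{-β₂ x})`. -/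
noncomputable def hbar (α₁ α₂ β₁ β₂ : ℝ) (p : ℝ × ℝ) : ℝ × ℝ :=
  ((1 - α₁) * β₁ * p.1 * psi (β₂ * p.2), g α₂ (1 - Real.exp (-(β₂ * p.2))))

/-!
On the quadrant, `hmap` and `hbar` agree with continuous maps `H` and `Hbar`, obtained by writing
`g α x = x * G α x` with `G α` continuous and `G α 0 = 1 - α`. The first coordinate of each map is
`p.1` times a continuous factor, so the `k`-th iterates have first coordinates `p.1 * A p` and
`p.1 * B p`, with `A`, `B` the products of these factors along the orbits. On the line `p.1 = 0` the
two maps and their factors coincide, so `A = B` there, while `B > 0` everywhere. Hence `A / B` is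
continuous and equal to `1` on the compact segment `{0} × [0, 1]`, and uniform continuity near that
segment gives `B / A = (A / B)⁻¹ → 1` uniformly as `p.1 → 0`.
-/

open Set Function Real

lemma mul_psi (x : ℝ) : x * psi x = 1 - exp (-x) := by
  rcases eq_or_ne x 0 with rfl | hx
  · simp
  · rw [psi, if_neg hx]; field_simp

lemma psi_pos (x : ℝ) : 0 < psi x := by
  rcases lt_trichotomy x 0 with hx | rfl | hx
  · rw [psi, if_neg hx.ne]
    exact div_pos_of_neg_of_neg (by linarith [Real.one_lt_exp_iff.2 (neg_pos.2 hx)]) hx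
  · simp [psi]
  · rw [psi, if_neg hx.ne']
    exact div_pos (by linarith [Real.exp_lt_one_iff.2 (neg_neg_of_pos hx)]) hx

lemma psi_eq_dslope : psi = dslope (fun y => 1 - exp (-y)) 0 := by
  ext x
  rcases eq_or_ne x 0 with rfl | hx
  · rw [dslope_same, psi, if_pos rfl]
    have : HasDerivAt (fun y => 1 - exp (-y)) 1 0 := by
      simpa using ((hasDerivAt_neg (0 : ℝ)).exp).const_sub 1
    exact this.deriv.symm
  · rw [dslope_of_ne _ hx, slope_def_field, psi, if_neg hx]
    simp

lemma continuous_psi : Continuous psi := by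
  rw [psi_eq_dslope, continuous_iff_continuousAt]
  intro x
  rcases eq_or_ne x 0 with rfl | hx
  · exact continuousAt_dslope_same.2 (by fun_prop)
  · exact (continuousAt_dslope_of_ne hx).2 (by fun_prop)

lemma mul_psi_mem_Icc {u S : ℝ} (hu : 0 ≤ u) (huS : u ≤ S) : u * psi S ∈ Icc 0 1 := by
  refine ⟨mul_nonneg hu (psi_pos S).le, ?_⟩
  calc u * psi S ≤ S * psi S := mul_le_mul_of_nonneg_right huS (psi_pos S).le
    _ = 1 - exp (-S) := mul_psi S
    _ ≤ 1 := by linarith [exp_pos (-S)]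

lemma ite_eq_mul_psi {u S : ℝ} (hu : S = 0 → u = 0) :
    (if S = 0 then 0 else (1 - exp (-S)) * u / S) = u * psi S := by
  rcases eq_or_ne S 0 with hS | hS
  · simp [hS, hu hS]
  · rw [if_neg hS, psi, if_neg hS]; ring

/-- Rationalising the numerator of `g` gives `g α x = x * G α x` (`g_eq_mul_G`). -/
noncomputable def G (α x : ℝ) : ℝ :=
  8 * (1 - α) * (1 - x) ^ 3 / (1 + √(1 - 4 * (1 - α) * x * (1 - x))) ^ 3

lemma continuous_G (α : ℝ) : Continuous (G α) :=
  Continuous.div (by fun_prop) (by fun_prop) fun x => by positivity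

lemma G_zero (α : ℝ) : G α 0 = 1 - α := by
  norm_num [G]

lemma G_nonneg {α x : ℝ} (hα : α ≤ 1) (hx : x ≤ 1) : 0 ≤ G α x := by
  have : 0 ≤ 1 - α := by linarith
  have : 0 ≤ 1 - x := by linarith
  unfold G; positivity

lemma g_eq_mul_G {α x : ℝ} (hα : α ≠ 1) (hx : 4 * (1 - α) * x * (1 - x) ≤ 1) :
    g α x = x * G α x := by
  rcases eq_or_ne x 0 with rfl | hx0
  · simp [g]
  set s := √(1 - 4 * (1 - α) * x * (1 - x))
  have hs : (1 - s) * (1 + s) = 4 * (1 - α) * x * (1 - x) := by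
    nlinarith [Real.sq_sqrt (sub_nonneg.2 hx)]
  have h1s : 0 < 1 + s := by positivity
  have hα' : 1 - α ≠ 0 := sub_ne_zero.2 hα.symm
  rw [g, if_neg hx0, G, mul_div_assoc', div_eq_div_iff (by positivity) (by positivity)]
  linear_combination congrArg (· ^ 3) hs

lemma g_eq_mul_G_of_mem {α x : ℝ} (hα : α ∈ Ico 0 1) (hx : x ∈ Icc 0 1) :
    g α x = x * G α x :=
  g_eq_mul_G hα.2.ne <| by
    nlinarith [mul_nonneg hx.1 (sub_nonneg.2 hx.2), sq_nonneg (2 * x - 1), hα.1]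

lemma Set.EqOn.iterate {α : Type*} {f f' : α → α} {s : Set α} (h : EqOn f f' s)
    (hf' : MapsTo f' s s) (n : ℕ) : EqOn f^[n] f'^[n] s := by
  induction n with
  | zero => exact fun _ _ => rfl
  | succ n ih =>
    intro x hx
    rw [iterate_succ_apply', iterate_succ_apply', ih hx, h (hf'.iterate n hx)]

def orbitProd {α M : Type*} [CommMonoid M] (T : α → α) (c : α → M) (k : ℕ) (p : α) : M :=
  ∏ j ∈ Finset.range k, c (T^[j] p)

lemma iterate_fst_eq_mul_orbitProd {M β : Type*} [CommMonoid M] {T : M × β → M × β}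
    {c : M × β → M} (hT : ∀ p, (T p).1 = p.1 * c p) (k : ℕ) (p : M × β) :
    (T^[k] p).1 = p.1 * orbitProd T c k p := by
  induction k with
  | zero => simp [orbitProd]
  | succ k ih =>
    rw [iterate_succ_apply', hT, ih, orbitProd, orbitProd, Finset.prod_range_succ, mul_assoc]

lemma continuous_orbitProd {α M : Type*} [TopologicalSpace α] [CommMonoid M] [TopologicalSpace M]
    [ContinuousMul M] {T : α → α} {c : α → M} (hT : Continuous T) (hc : Continuous c) (k : ℕ) :
    Continuous (orbitProd T c k) :=
  continuous_finsetProd _ fun j _ => hc.comp (hT.iterate j)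

lemma eqOn_orbitProd {α M : Type*} [CommMonoid M] {T T' : α → α} {c c' : α → M} {s : Set α}
    (hT : EqOn T T' s) (hc : EqOn c c' s) (hT' : MapsTo T' s s) (k : ℕ) :
    EqOn (orbitProd T c k) (orbitProd T' c' k) s := fun p hp =>
  Finset.prod_congr rfl fun j _ => by
    rw [hT.iterate hT' j hp, hc (hT'.iterate j hp)]

lemma exists_pos_forall_dist_lt_of_continuous {α β γ : Type*} [PseudoMetricSpace α]
    [TopologicalSpace β] [PseudoMetricSpace γ] {F : α × β → γ} (hF : Continuous F) {K : Set β}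
    (hK : IsCompact K) (x₀ : α) {ε : ℝ} (hε : 0 < ε) :
    ∃ δ > 0, ∀ x, dist x x₀ < δ → ∀ y ∈ K, dist (F (x, y)) (F (x₀, y)) < ε := by
  obtain ⟨v, hv, hvF⟩ := hK.mem_uniformity_of_prod (f := fun x y => F (x, y)) (s := univ)
    hF.continuousOn (mem_univ x₀) (Metric.dist_mem_uniformity hε)
  obtain ⟨δ, hδ, hball⟩ := Metric.mem_nhds_iff.1 (nhdsWithin_univ x₀ ▸ hv)
  exact ⟨δ, hδ, fun x hx y hy => hvF x (hball hx) y hy⟩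

section Models

variable {α₁ α₂ β₁ β₂ : ℝ}

noncomputable def H (α₁ α₂ β₁ β₂ : ℝ) (p : ℝ × ℝ) : ℝ × ℝ :=
  (β₁ * p.1 * psi (Sig β₁ β₂ p) * G α₁ (β₁ * p.1 * psi (Sig β₁ β₂ p)),
    β₂ * p.2 * psi (Sig β₁ β₂ p) * G α₂ (β₂ * p.2 * psi (Sig β₁ β₂ p)))

noncomputable def Hbar (α₁ α₂ β₁ β₂ : ℝ) (p : ℝ × ℝ) : ℝ × ℝ :=
  ((1 - α₁) * β₁ * p.1 * psi (β₂ * p.2),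
    (1 - exp (-(β₂ * p.2))) * G α₂ (1 - exp (-(β₂ * p.2))))

noncomputable def hmapFactor (α₁ β₁ β₂ : ℝ) (p : ℝ × ℝ) : ℝ :=
  β₁ * psi (Sig β₁ β₂ p) * G α₁ (β₁ * p.1 * psi (Sig β₁ β₂ p))

noncomputable def hbarFactor (α₁ β₁ β₂ : ℝ) (p : ℝ × ℝ) : ℝ :=
  (1 - α₁) * β₁ * psi (β₂ * p.2)

lemma H_fst (p : ℝ × ℝ) : (H α₁ α₂ β₁ β₂ p).1 = p.1 * hmapFactor α₁ β₁ β₂ p := by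
  simp only [H, hmapFactor]; ring

lemma Hbar_fst (p : ℝ × ℝ) : (Hbar α₁ α₂ β₁ β₂ p).1 = p.1 * hbarFactor α₁ β₁ β₂ p := by
  simp only [Hbar, hbarFactor]; ring

lemma continuous_H : Continuous (H α₁ α₂ β₁ β₂) := by
  have := continuous_G α₁; have := continuous_G α₂; have := continuous_psi
  unfold H Sig; fun_prop

lemma continuous_Hbar : Continuous (Hbar α₁ α₂ β₁ β₂) := by
  have := continuous_G α₂; have := continuous_psi
  unfold Hbar; fun_prop

lemma continuous_hmapFactor : Continuous (hmapFactor α₁ β₁ β₂) := by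
  have := continuous_G α₁; have := continuous_psi
  unfold hmapFactor Sig; fun_prop

lemma continuous_hbarFactor : Continuous (hbarFactor α₁ β₁ β₂) := by
  have := continuous_psi
  unfold hbarFactor; fun_prop

lemma hbarFactor_pos (hα₁ : α₁ < 1) (hβ₁ : 0 < β₁) (p : ℝ × ℝ) : 0 < hbarFactor α₁ β₁ β₂ p :=
  mul_pos (mul_pos (sub_pos.2 hα₁) hβ₁) (psi_pos _)

lemma eqOn_H_Hbar : EqOn (H α₁ α₂ β₁ β₂) (Hbar α₁ α₂ β₁ β₂) {p | p.1 = 0} := by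
  intro p (hp : p.1 = 0)
  simp [H, Hbar, Sig, hp, mul_psi]

lemma eqOn_hmapFactor_hbarFactor :
    EqOn (hmapFactor α₁ β₁ β₂) (hbarFactor α₁ β₁ β₂) {p | p.1 = 0} := by
  intro p (hp : p.1 = 0)
  simp only [hmapFactor, hbarFactor, Sig, hp, mul_zero, zero_mul, zero_add, G_zero]
  ring

lemma mapsTo_Hbar_fst_eq_zero : MapsTo (Hbar α₁ α₂ β₁ β₂) {p | p.1 = 0} {p | p.1 = 0} :=
  fun p (hp : p.1 = 0) => by simp [Hbar_fst, hp]

lemma f1_eq_mul_psi (hβ₁ : 0 ≤ β₁) (hβ₂ : 0 ≤ β₂) {p : ℝ × ℝ} (hp : 0 ≤ p.1 ∧ 0 ≤ p.2) :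
    f1 β₁ β₂ p = β₁ * p.1 * psi (Sig β₁ β₂ p) :=
  ite_eq_mul_psi fun h => by
    unfold Sig at h; nlinarith [mul_nonneg hβ₁ hp.1, mul_nonneg hβ₂ hp.2]

lemma f2_eq_mul_psi (hβ₁ : 0 ≤ β₁) (hβ₂ : 0 ≤ β₂) {p : ℝ × ℝ} (hp : 0 ≤ p.1 ∧ 0 ≤ p.2) :
    f2 β₁ β₂ p = β₂ * p.2 * psi (Sig β₁ β₂ p) :=
  ite_eq_mul_psi fun h => by
    unfold Sig at h; nlinarith [mul_nonneg hβ₁ hp.1, mul_nonneg hβ₂ hp.2]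

lemma fst_mul_psi_Sig_mem_Icc (hβ₁ : 0 ≤ β₁) (hβ₂ : 0 ≤ β₂) {p : ℝ × ℝ}
    (hp : 0 ≤ p.1 ∧ 0 ≤ p.2) :
    β₁ * p.1 * psi (Sig β₁ β₂ p) ∈ Icc 0 1 :=
  mul_psi_mem_Icc (mul_nonneg hβ₁ hp.1) (by unfold Sig; nlinarith [mul_nonneg hβ₂ hp.2])

lemma snd_mul_psi_Sig_mem_Icc (hβ₁ : 0 ≤ β₁) (hβ₂ : 0 ≤ β₂) {p : ℝ × ℝ}
    (hp : 0 ≤ p.1 ∧ 0 ≤ p.2) :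
    β₂ * p.2 * psi (Sig β₁ β₂ p) ∈ Icc 0 1 :=
  mul_psi_mem_Icc (mul_nonneg hβ₂ hp.2) (by unfold Sig; nlinarith [mul_nonneg hβ₁ hp.1])

lemma one_sub_exp_neg_mem_Icc {x : ℝ} (hx : 0 ≤ x) : 1 - exp (-x) ∈ Icc 0 1 :=
  ⟨by linarith [exp_le_one_iff.2 (neg_nonpos.2 hx)], by linarith [exp_pos (-x)]⟩

lemma eqOn_hmap_H (hα₁ : α₁ ∈ Ico 0 1) (hα₂ : α₂ ∈ Ico 0 1) (hβ₁ : 0 ≤ β₁) (hβ₂ : 0 ≤ β₂) :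
    EqOn (hmap α₁ α₂ β₁ β₂) (H α₁ α₂ β₁ β₂) {p | 0 ≤ p.1 ∧ 0 ≤ p.2} := fun p hp => by
  rw [hmap, H, f1_eq_mul_psi hβ₁ hβ₂ hp, f2_eq_mul_psi hβ₁ hβ₂ hp,
    g_eq_mul_G_of_mem hα₁ (fst_mul_psi_Sig_mem_Icc hβ₁ hβ₂ hp),
    g_eq_mul_G_of_mem hα₂ (snd_mul_psi_Sig_mem_Icc hβ₁ hβ₂ hp)]

lemma mapsTo_H (hα₁ : α₁ ≤ 1) (hα₂ : α₂ ≤ 1) (hβ₁ : 0 ≤ β₁) (hβ₂ : 0 ≤ β₂) :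
    MapsTo (H α₁ α₂ β₁ β₂) {p | 0 ≤ p.1 ∧ 0 ≤ p.2} {p | 0 ≤ p.1 ∧ 0 ≤ p.2} := fun _ hp =>
  have h₁ := fst_mul_psi_Sig_mem_Icc hβ₁ hβ₂ hp
  have h₂ := snd_mul_psi_Sig_mem_Icc hβ₁ hβ₂ hp
  ⟨mul_nonneg h₁.1 (G_nonneg hα₁ h₁.2), mul_nonneg h₂.1 (G_nonneg hα₂ h₂.2)⟩

lemma eqOn_hbar_Hbar (hα₂ : α₂ ∈ Ico 0 1) (hβ₂ : 0 ≤ β₂) :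
    EqOn (hbar α₁ α₂ β₁ β₂) (Hbar α₁ α₂ β₁ β₂) {p | 0 ≤ p.2} := fun p (hp : 0 ≤ p.2) => by
  rw [hbar, Hbar, g_eq_mul_G_of_mem hα₂ (one_sub_exp_neg_mem_Icc (mul_nonneg hβ₂ hp))]

lemma mapsTo_Hbar (hα₂ : α₂ ≤ 1) (hβ₂ : 0 ≤ β₂) :
    MapsTo (Hbar α₁ α₂ β₁ β₂) {p | 0 ≤ p.2} {p | 0 ≤ p.2} := fun _ hp =>
  have h := one_sub_exp_neg_mem_Icc (mul_nonneg hβ₂ hp)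
  mul_nonneg h.1 (G_nonneg hα₂ h.2)

lemma hbar_iterate_fst_div_hmap_iterate_fst (hα₁ : α₁ ∈ Ico 0 1)
    (hα₂ : α₂ ∈ Ico 0 1) (hβ₁ : 0 ≤ β₁) (hβ₂ : 0 ≤ β₂) (k : ℕ) {p : ℝ × ℝ} (hp₁ : 0 < p.1)
    (hp₂ : 0 ≤ p.2) :
    ((hbar α₁ α₂ β₁ β₂)^[k] p).1 / ((hmap α₁ α₂ β₁ β₂)^[k] p).1 =
      (orbitProd (H α₁ α₂ β₁ β₂) (hmapFactor α₁ β₁ β₂) k p /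
        orbitProd (Hbar α₁ α₂ β₁ β₂) (hbarFactor α₁ β₁ β₂) k p)⁻¹ := by
  rw [(eqOn_hbar_Hbar hα₂ hβ₂).iterate (mapsTo_Hbar hα₂.2.le hβ₂) k (show 0 ≤ p.2 from hp₂),
    (eqOn_hmap_H hα₁ hα₂ hβ₁ hβ₂).iterate (mapsTo_H hα₁.2.le hα₂.2.le hβ₁ hβ₂) k
      (show 0 ≤ p.1 ∧ 0 ≤ p.2 from ⟨hp₁.le, hp₂⟩),
    iterate_fst_eq_mul_orbitProd Hbar_fst, iterate_fst_eq_mul_orbitProd H_fst,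
    mul_div_mul_left _ _ hp₁.ne', inv_div]

end Models

theorem stmt10 (α₁ α₂ β₁ β₂ : ℝ)
    (hα₁ : α₁ ∈ Set.Ico (0 : ℝ) 1) (hα₂ : α₂ ∈ Set.Ico (0 : ℝ) 1)
    (hβ₁ : 0 < β₁) (hβ₂ : 0 < β₂) (k : ℕ) :
    ∀ ε : ℝ, 0 < ε → ∃ δ : ℝ, 0 < δ ∧
      ∀ p₁ p₂ : ℝ, 0 < p₁ → p₁ < δ → 0 ≤ p₂ → p₂ ≤ 1 - p₁ →
        |((hbar α₁ α₂ β₁ β₂)^[k] (p₁, p₂)).1 / ((hmap α₁ α₂ β₁ β₂)^[k] (p₁, p₂)).1 - 1| < ε := by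
  intro ε hε
  set A := orbitProd (H α₁ α₂ β₁ β₂) (hmapFactor α₁ β₁ β₂) k
  set B := orbitProd (Hbar α₁ α₂ β₁ β₂) (hbarFactor α₁ β₁ β₂) k
  have hB : ∀ p, B p ≠ 0 := fun _ =>
    (Finset.prod_pos fun _ _ => hbarFactor_pos hα₁.2 hβ₁ _).ne'
  have hAB : Continuous fun p => A p / B p :=
    (continuous_orbitProd continuous_H continuous_hmapFactor k).div
      (continuous_orbitProd continuous_Hbar continuous_hbarFactor k) hB
  have hAB₀ : ∀ q : ℝ, A (0, q) = B (0, q) := fun _ =>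
    eqOn_orbitProd eqOn_H_Hbar eqOn_hmapFactor_hbarFactor mapsTo_Hbar_fst_eq_zero k rfl
  obtain ⟨η, hη, hinv⟩ :=
    Metric.continuousAt_iff.1 (continuousAt_inv₀ (one_ne_zero (α := ℝ))) ε hε
  obtain ⟨δ, hδ, hnear⟩ :=
    exists_pos_forall_dist_lt_of_continuous hAB (isCompact_Icc (a := 0) (b := 1)) 0 hη
  refine ⟨δ, hδ, fun p₁ p₂ hp₁ hp₁δ hp₂ hp₂₁ => ?_⟩
  have h := hnear p₁ (by rwa [Real.dist_0_eq_abs, abs_of_pos hp₁]) p₂ ⟨hp₂, by linarith⟩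
  rw [hAB₀, div_self (hB _)] at h
  rw [hbar_iterate_fst_div_hmap_iterate_fst hα₁ hα₂ hβ₁.le hβ₂.le k (p := (p₁, p₂)) hp₁ hp₂,
    ← Real.dist_eq, ← inv_one]
  exact hinv h
end
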